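/- arXiv:1708.01220 — 3 statements merged into one kernel-verified Lean document; each statement's English description precedes it below -/
import Mathlib

section
/- Let p be a prime, k a positive integer with p > k, and c a positive integer. Suppose φ₁,…,φ_k ∈ ℤ[t] satisfy φ_j(t) ≡ t^j (mod p^c) for 1 ≤ j ≤ k (coefficientwise congruence). Then the Wronskian W(t;φ) = det(φ_j^{(i)}(t))_{1≤i,j≤k} is a nonzero polynomial; indeed W(t;φ) ≡ ∏_{j=1}^k j! (mod p) as polynomials, and this product is not divisible by p. -/
open Polynomial

/-- A `p^c`-spaced system of polynomials has Wronskian congruent to `∏ j!` modulo `p`,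
which is nonzero mod `p` since `p > k`; in particular the Wronskian is nonzero. -/
theorem stmt0 (p k c : ℕ) (hp : p.Prime) (hk : 0 < k) (hpk : k < p) (hc : 0 < c)
    (φ : Fin k → Polynomial ℤ)
    (hφ : ∀ j : Fin k, (φ j).map (Int.castRingHom (ZMod (p ^ c))) = X ^ ((j : ℕ) + 1)) :
    (Matrix.det (Matrix.of fun i j : Fin k =>
          (⇑Polynomial.derivative)^[(i : ℕ) + 1] (φ j))).map (Int.castRingHom (ZMod p)) =
        C ((∏ j ∈ Finset.range k, Nat.factorial (j + 1) : ℕ) : ZMod p) ∧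
      ((∏ j ∈ Finset.range k, Nat.factorial (j + 1) : ℕ) : ZMod p) ≠ 0 ∧
      Matrix.det (Matrix.of fun i j : Fin k =>
          (⇑Polynomial.derivative)^[(i : ℕ) + 1] (φ j)) ≠ 0 := by
  have hdvd : p ∣ p ^ c := dvd_pow_self p hc.ne'
  have hmap : ∀ j : Fin k, (φ j).map (Int.castRingHom (ZMod p)) = X ^ ((j : ℕ) + 1) := by
    intro j
    have : ((φ j).map (Int.castRingHom (ZMod (p ^ c)))).map (ZMod.castHom hdvd (ZMod p)) =
        (φ j).map (Int.castRingHom (ZMod p)) := by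
      rw [Polynomial.map_map]
      congr 1
      exact Subsingleton.elim _ _
    rw [← this, hφ j, Polynomial.map_pow, Polynomial.map_X]
  -- determinant maps
  have hdet : (Matrix.det (Matrix.of fun i j : Fin k =>
          (⇑Polynomial.derivative)^[(i : ℕ) + 1] (φ j))).map (Int.castRingHom (ZMod p)) =
      Matrix.det (Matrix.of fun i j : Fin k =>
          C ((Nat.descFactorial ((j : ℕ) + 1) ((i : ℕ) + 1) : ZMod p)) *
            X ^ (((j : ℕ) + 1) - ((i : ℕ) + 1))) := by
    rw [show ((Matrix.det (Matrix.of fun i j : Fin k =>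
          (⇑Polynomial.derivative)^[(i : ℕ) + 1] (φ j))).map (Int.castRingHom (ZMod p)))
        = (Polynomial.mapRingHom (Int.castRingHom (ZMod p)))
          (Matrix.det (Matrix.of fun i j : Fin k =>
          (⇑Polynomial.derivative)^[(i : ℕ) + 1] (φ j))) from rfl,
      RingHom.map_det]
    congr 1
    refine Matrix.ext fun i j => ?_
    simp only [RingHom.mapMatrix_apply, Matrix.map_apply, Matrix.of_apply, coe_mapRingHom]
    rw [← Polynomial.iterate_derivative_map, hmap j,
      Polynomial.iterate_derivative_X_pow_eq_C_mul]
  have htri : Matrix.det (Matrix.of fun i j : Fin k =>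
          C ((Nat.descFactorial ((j : ℕ) + 1) ((i : ℕ) + 1) : ZMod p)) *
            X ^ (((j : ℕ) + 1) - ((i : ℕ) + 1))) =
      C ((∏ j ∈ Finset.range k, Nat.factorial (j + 1) : ℕ) : ZMod p) := by
    rw [Matrix.det_of_upperTriangular]
    · rw [← Fin.prod_univ_eq_prod_range (fun j => (Nat.factorial (j + 1) : ℕ)) k,
        Nat.cast_prod, map_prod (C : ZMod p →+* (ZMod p)[X])]
      refine Finset.prod_congr rfl fun i _ => ?_
      show C ((Nat.descFactorial ((i : ℕ) + 1) ((i : ℕ) + 1) : ZMod p)) *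
          X ^ (((i : ℕ) + 1) - ((i : ℕ) + 1)) = C ((Nat.factorial ((i : ℕ) + 1) : ZMod p))
      rw [Nat.descFactorial_self, Nat.sub_self, pow_zero, mul_one]
    · intro i j hji
      have hlt : (j : ℕ) + 1 < (i : ℕ) + 1 := by
        simpa using (show (j : ℕ) < i from hji)
      show C ((Nat.descFactorial ((j : ℕ) + 1) ((i : ℕ) + 1) : ZMod p)) *
          X ^ (((j : ℕ) + 1) - ((i : ℕ) + 1)) = 0
      rw [Nat.descFactorial_eq_zero_iff_lt.2 hlt]
      simp
  have h1 := hdet.trans htri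
  have h2 : ((∏ j ∈ Finset.range k, Nat.factorial (j + 1) : ℕ) : ZMod p) ≠ 0 := by
    rw [Ne, ZMod.natCast_eq_zero_iff]
    intro hdvd'
    obtain ⟨j, hj, hdj⟩ := (Prime.dvd_finset_prod_iff hp.prime _).1 hdvd'
    have := (Nat.Prime.dvd_factorial hp).1 hdj
    have : j + 1 ≤ k := Finset.mem_range.1 hj
    omega
  refine ⟨h1, h2, fun h0 => ?_⟩
  rw [h0, Polynomial.map_zero] at h1
  exact h2 (Polynomial.C_eq_zero.mp h1.symm)
end

section
/- Let k > r ≥ 1 and let p be a prime with p > k. Define the r×r matrix A with entries A_{i,l} = binom(k−r+l, i) for 1 ≤ i, l ≤ r. Then (1!·2!⋯r!)·det(A) = (∏_{l=1}^r (k−l+1)) · ∏_{1≤i<j≤r}((k−j+1)−(k−i+1)) up to sign, and in particular det(A) is not divisible by p. -/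
open Finset Polynomial

/-- Convert a product over the filtered pair set to a nested `Ioi` product. -/
lemma prod_pairs_eq {M : Type*} [CommMonoid M] {n : ℕ} (f : Fin n → Fin n → M) :
    ∏ q ∈ Finset.univ.filter (fun q : Fin n × Fin n => q.1 < q.2), f q.1 q.2 =
      ∏ i : Fin n, ∏ j ∈ Finset.Ioi i, f i j := by
  rw [Finset.prod_filter, ← Finset.univ_product_univ,
    Finset.prod_product' (f := fun i j => if i < j then f i j else 1)]
  refine Finset.prod_congr rfl fun i _ => ?_
  rw [(Finset.prod_filter (fun j => i < j) (f i)).symm]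
  congr 1
  ext j
  simp [Finset.mem_Ioi]

/-- The key determinant identity. -/
lemma key_det (k r : ℕ) (hrk : r < k) :
    (∏ l ∈ Finset.range r, (Nat.factorial (l + 1) : ℤ)) *
        Matrix.det (Matrix.of fun i l : Fin r =>
          (Nat.choose (k - r + ((l : ℕ) + 1)) ((i : ℕ) + 1) : ℤ)) =
      (∏ l ∈ Finset.range r, ((k : ℤ) - l)) *
        ∏ i : Fin r, ∏ j ∈ Finset.Ioi i, (((j : ℕ) : ℤ) - ((i : ℕ) : ℤ)) := by
  have hk : r ≤ k := hrk.le
  set v : Fin r → ℤ := fun l => ((k - r + ((l : ℕ) + 1) : ℕ) : ℤ) with hv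
  have hvl : ∀ l : Fin r, v l = (k : ℤ) - r + (l : ℕ) + 1 := by
    intro l
    simp only [hv]
    push_cast [Nat.cast_sub hk]
    ring
  -- entries times factorial are descPochhammer evals
  have hent : ∀ i l : Fin r,
      ((Nat.factorial ((i : ℕ) + 1) : ℤ)) *
          (Nat.choose (k - r + ((l : ℕ) + 1)) ((i : ℕ) + 1) : ℤ) =
        v l * (descPochhammer ℤ (i : ℕ)).eval (v l - 1) := by
    intro i l
    have h1 : (((k - r + ((l : ℕ) + 1)).descFactorial ((i : ℕ) + 1) : ℕ) : ℤ) =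
        (descPochhammer ℤ ((i : ℕ) + 1)).eval (v l) := by
      rw [descPochhammer_eval_eq_descFactorial]
    rw [Nat.descFactorial_eq_factorial_mul_choose] at h1
    push_cast at h1
    rw [h1, descPochhammer_succ_left, Polynomial.eval_mul, Polynomial.eval_X,
      Polynomial.eval_comp, Polynomial.eval_sub, Polynomial.eval_X, Polynomial.eval_one]
  -- first product rewrite
  have hfact : (∏ l ∈ Finset.range r, (Nat.factorial (l + 1) : ℤ)) =
      ∏ i : Fin r, (Nat.factorial ((i : ℕ) + 1) : ℤ) :=
    (Fin.prod_univ_eq_prod_range (fun i => (Nat.factorial (i + 1) : ℤ)) r).symm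
  rw [hfact, ← Matrix.det_mul_column]
  have hM : (Matrix.of fun i l : Fin r =>
        (Nat.factorial ((i : ℕ) + 1) : ℤ) *
          (Matrix.of fun i l : Fin r =>
            (Nat.choose (k - r + ((l : ℕ) + 1)) ((i : ℕ) + 1) : ℤ)) i l) =
      Matrix.of fun i l : Fin r => v l * (descPochhammer ℤ (i : ℕ)).eval (v l - 1) := by
    ext i l
    exact hent i l
  rw [hM, Matrix.det_mul_row v (fun i l : Fin r => (descPochhammer ℤ (i : ℕ)).eval (v l - 1))]
  -- the remaining determinant is a transposed polynomial-Vandermonde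
  have hvd : (Matrix.det fun i l : Fin r => (descPochhammer ℤ (i : ℕ)).eval (v l - 1)) =
      ∏ i : Fin r, ∏ j ∈ Finset.Ioi i, ((v j - 1) - (v i - 1)) := by
    have h1 := Matrix.det_eval_matrixOfPolynomials_eq_det_vandermonde (fun l : Fin r => v l - 1)
      (fun i => descPochhammer ℤ (i : ℕ))
      (fun i => descPochhammer_natDegree (R := ℤ) (i : ℕ))
      (fun i => monic_descPochhammer ℤ (i : ℕ))
    rw [Matrix.det_vandermonde] at h1
    exact (Matrix.det_transpose
      (Matrix.of fun l i : Fin r => (descPochhammer ℤ (i : ℕ)).eval (v l - 1))).trans h1.symm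
  rw [hvd]
  -- compare the two products
  have hprod1 : (∏ l : Fin r, v l) = ∏ l ∈ Finset.range r, ((k : ℤ) - l) := by
    rw [Fin.prod_univ_eq_prod_range (fun l => ((k - r + (l + 1) : ℕ) : ℤ)) r]
    rw [← Finset.prod_range_reflect (fun l => ((k - r + (l + 1) : ℕ) : ℤ)) r]
    refine Finset.prod_congr rfl fun l hl => ?_
    have hl' : l < r := Finset.mem_range.mp hl
    have : k - r + (r - 1 - l + 1) = k - l := by omega
    rw [this]
    have : l ≤ k := by omega
    push_cast [Nat.cast_sub this]
    ring
  have hprod2 : (∏ i : Fin r, ∏ j ∈ Finset.Ioi i, ((v j - 1) - (v i - 1))) =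
      ∏ i : Fin r, ∏ j ∈ Finset.Ioi i, (((j : ℕ) : ℤ) - ((i : ℕ) : ℤ)) := by
    refine Finset.prod_congr rfl fun i _ => Finset.prod_congr rfl fun j _ => ?_
    rw [hvl i, hvl j]; ring
  rw [hprod1, hprod2]

/-- For `1 ≤ r < k < p` with `p` prime, the matrix `A` with entries
`A_{i,l} = binom(k−r+l, i)` satisfies, up to sign,
`(1!·2!⋯r!)·det A = (∏_{l=1}^r (k−l+1)) · ∏_{i<j} ((k−j+1)−(k−i+1))`, and in
particular `p ∤ det A`. -/
theorem stmt3 (k r p : ℕ) (hr : 1 ≤ r) (hrk : r < k) (hp : p.Prime) (hpk : k < p) :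
    ((∏ l ∈ Finset.range r, (Nat.factorial (l + 1) : ℤ)) *
          Matrix.det (Matrix.of fun i l : Fin r =>
            (Nat.choose (k - r + ((l : ℕ) + 1)) ((i : ℕ) + 1) : ℤ)) =
        (∏ l ∈ Finset.range r, ((k : ℤ) - ((l : ℤ) + 1) + 1)) *
          ∏ q ∈ Finset.univ.filter (fun q : Fin r × Fin r => q.1 < q.2),
            (((k : ℤ) - (((q.2 : ℕ) : ℤ) + 1) + 1) - ((k : ℤ) - (((q.1 : ℕ) : ℤ) + 1) + 1)) ∨
      (∏ l ∈ Finset.range r, (Nat.factorial (l + 1) : ℤ)) *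
          Matrix.det (Matrix.of fun i l : Fin r =>
            (Nat.choose (k - r + ((l : ℕ) + 1)) ((i : ℕ) + 1) : ℤ)) =
        -((∏ l ∈ Finset.range r, ((k : ℤ) - ((l : ℤ) + 1) + 1)) *
          ∏ q ∈ Finset.univ.filter (fun q : Fin r × Fin r => q.1 < q.2),
            (((k : ℤ) - (((q.2 : ℕ) : ℤ) + 1) + 1) - ((k : ℤ) - (((q.1 : ℕ) : ℤ) + 1) + 1)))) ∧
    ¬ (p : ℤ) ∣ Matrix.det (Matrix.of fun i l : Fin r =>
        (Nat.choose (k - r + ((l : ℕ) + 1)) ((i : ℕ) + 1) : ℤ)) := by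
  have key := key_det k r hrk
  set D := Matrix.det (Matrix.of fun i l : Fin r =>
      (Nat.choose (k - r + ((l : ℕ) + 1)) ((i : ℕ) + 1) : ℤ)) with hD
  set F := ∏ l ∈ Finset.range r, (Nat.factorial (l + 1) : ℤ) with hF
  set P := ∏ l ∈ Finset.range r, ((k : ℤ) - l) with hP
  set V := ∏ i : Fin r, ∏ j ∈ Finset.Ioi i, (((j : ℕ) : ℤ) - ((i : ℕ) : ℤ)) with hV
  -- rewrite the statement's RHS pieces
  have hP' : (∏ l ∈ Finset.range r, ((k : ℤ) - ((l : ℤ) + 1) + 1)) = P := by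
    refine Finset.prod_congr rfl fun l _ => ?_; ring
  set N := (Finset.univ.filter (fun q : Fin r × Fin r => q.1 < q.2)).card with hN
  have hQ : (∏ q ∈ Finset.univ.filter (fun q : Fin r × Fin r => q.1 < q.2),
      (((k : ℤ) - (((q.2 : ℕ) : ℤ) + 1) + 1) - ((k : ℤ) - (((q.1 : ℕ) : ℤ) + 1) + 1))) =
      (-1) ^ N * V := by
    have h1 : (∏ q ∈ Finset.univ.filter (fun q : Fin r × Fin r => q.1 < q.2),
        (((k : ℤ) - (((q.2 : ℕ) : ℤ) + 1) + 1) - ((k : ℤ) - (((q.1 : ℕ) : ℤ) + 1) + 1))) =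
        ∏ q ∈ Finset.univ.filter (fun q : Fin r × Fin r => q.1 < q.2),
          (-1 : ℤ) * (((q.2 : ℕ) : ℤ) - ((q.1 : ℕ) : ℤ)) := by
      refine Finset.prod_congr rfl fun q _ => ?_; ring
    rw [h1, Finset.prod_mul_distrib, Finset.prod_const, ← hN]
    congr 1
    exact prod_pairs_eq (fun i j => (((j : ℕ) : ℤ) - ((i : ℕ) : ℤ)))
  constructor
  · rcases Nat.even_or_odd N with he | ho
    · left
      rw [hP', hQ, he.neg_one_pow, one_mul, key]
    · right
      rw [hP', hQ, ho.neg_one_pow, key]; ring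
  · -- divisibility
    intro hdvd
    have hpZ : Prime (p : ℤ) := Nat.prime_iff_prime_int.mp hp
    have hdvd2 : (p : ℤ) ∣ P * V := by
      rw [← key]; exact Dvd.dvd.mul_left hdvd F
    rcases hpZ.dvd_mul.mp hdvd2 with hA | hB
    · obtain ⟨l, hl, hdl⟩ := (hpZ.dvd_finset_prod_iff _).mp hA
      have hl' : l < r := Finset.mem_range.mp hl
      have h0 : (k : ℤ) - l = 0 := by
        refine Int.eq_zero_of_abs_lt_dvd hdl ?_
        rw [abs_of_pos (by push_cast; omega)]
        push_cast; omega
      omega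
    · obtain ⟨i, _, hi⟩ := (hpZ.dvd_finset_prod_iff _).mp hB
      obtain ⟨j, hj, hdj⟩ := (hpZ.dvd_finset_prod_iff _).mp hi
      have hij : (i : ℕ) < (j : ℕ) := Fin.lt_iff_val_lt_val.mp (Finset.mem_Ioi.mp hj)
      have hjr : (j : ℕ) < r := j.isLt
      have h0 : ((j : ℕ) : ℤ) - ((i : ℕ) : ℤ) = 0 := by
        refine Int.eq_zero_of_abs_lt_dvd hdj ?_
        rw [abs_of_pos (by push_cast; omega)]
        push_cast; omega
      omega
end

section
/- Let p be a prime, c ≥ 1 and B ≥ 1 integers, and ψ ∈ ℤ[t]. Define φ(t) = t + p^c ψ(t). If x, y ∈ ℤ satisfy φ(x) ≡ φ(y) (mod p^B), then x ≡ y (mod p^B). -/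
open Polynomial

/-- Base case of nested efficient congruencing: for `φ(t) = t + p^c ψ(t)` with `c ≥ 1`,
the congruence `φ(x) ≡ φ(y) (mod p^B)` forces `x ≡ y (mod p^B)`. -/
theorem stmt4 (p : ℕ) (hp : p.Prime) (c B : ℕ) (hc : 1 ≤ c) (hB : 1 ≤ B)
    (ψ : Polynomial ℤ) (x y : ℤ)
    (h : ((p : ℤ) ^ B) ∣ ((X + C ((p : ℤ) ^ c) * ψ).eval x - (X + C ((p : ℤ) ^ c) * ψ).eval y)) :
    ((p : ℤ) ^ B) ∣ (x - y) := by
  simp only [eval_add, eval_mul, eval_X, eval_C] at h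
  have key : x - y = ((x + (p:ℤ)^c * ψ.eval x) - (y + (p:ℤ)^c * ψ.eval y))
      - (p:ℤ)^c * (ψ.eval x - ψ.eval y) := by ring
  have hdvd : (x - y) ∣ (ψ.eval x - ψ.eval y) := sub_dvd_eval_sub x y ψ
  have main : ∀ m : ℕ, (p:ℤ) ^ (min m B) ∣ (x - y) := by
    intro m
    induction m with
    | zero => simp
    | succ n ih =>
      rcases le_or_gt B n with hle | hlt
      · rwa [min_eq_right (by omega), ← min_eq_right hle]
      · have hn : (p:ℤ) ^ n ∣ x - y := by rwa [min_eq_left (by omega)] at ih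
        have h1 : (p:ℤ) ^ (n + c) ∣ (p:ℤ)^c * (ψ.eval x - ψ.eval y) := by
          rw [add_comm, pow_add]
          exact mul_dvd_mul dvd_rfl (hn.trans hdvd)
        have h2 : (p:ℤ) ^ (min (n + c) B) ∣ x - y := by
          rw [key]
          exact dvd_sub ((pow_dvd_pow _ (min_le_right _ _)).trans h)
            ((pow_dvd_pow _ (min_le_left _ _)).trans h1)
        exact (pow_dvd_pow _ (by omega : min (n+1) B ≤ min (n+c) B)).trans h2
  simpa using main B
end
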